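/- arXiv:2601.01295 — 5 statements merged into one kernel-verified Lean document; each statement's English description precedes it below -/
import Mathlib

section
/- If s > d/2, then H^s(ℝ^d) embeds continuously into the log-Barron space: there exists a constant C = C(d,s) such that every f ∈ L²(ℝ^d) with ‖f‖_{H^s} < ∞ has Fourier transform in L¹(ℝ^d) and satisfies ‖f‖_{B^log} = ∫_{ℝ^d} log₂(2+‖ξ‖₁)|f̂(ξ)| dξ ≤ C ‖f‖_{H^s}. -/
open MeasureTheory Real Filter

noncomputable section

/-- The ℓ¹ norm on `ℝ^d`. -/
def l1 {d : ℕ} (ξ : Fin d → ℝ) : ℝ := ∑ i, |ξ i|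

/-- The Fourier transform `f̂(ξ) = ∫ f(x) e^{-2πi ξ·x} dx`. -/
def fhat {d : ℕ} (f : (Fin d → ℝ) → ℂ) (ξ : Fin d → ℝ) : ℂ :=
  ∫ x : Fin d → ℝ,
    Complex.exp (-(2 * (Real.pi : ℂ) * Complex.I * ((∑ i, ξ i * x i : ℝ) : ℂ))) * f x

/-- Fourier transform of a real-valued function. -/
def fhatR {d : ℕ} (f : (Fin d → ℝ) → ℝ) : (Fin d → ℝ) → ℂ :=
  fhat (fun x => (f x : ℂ))

/-- log-Barron norm `∫ log₂(2+‖ξ‖₁)|g(ξ)| dξ` of a frequency-side function `g`. -/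
def logBarron {d : ℕ} (g : (Fin d → ℝ) → ℂ) : ℝ :=
  ∫ ξ : Fin d → ℝ, Real.logb 2 (2 + l1 ξ) * ‖g ξ‖

/-- Barron norm of order 0 : `∫ (1 + ‖ξ‖₁⁰)|g(ξ)| dξ = 2∫|g(ξ)|dξ`. -/
def B0 {d : ℕ} (g : (Fin d → ℝ) → ℂ) : ℝ := 2 * ∫ ξ : Fin d → ℝ, ‖g ξ‖

/-- Barron norm of order 1 : `∫ (1 + ‖ξ‖₁)|g(ξ)| dξ`. -/
def B1 {d : ℕ} (g : (Fin d → ℝ) → ℂ) : ℝ := ∫ ξ : Fin d → ℝ, (1 + l1 ξ) * ‖g ξ‖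

/-- first-order log-Barron norm `∫ (1+‖ξ‖₁) log₂(2+‖ξ‖₁)|g(ξ)| dξ`. -/
def B1log {d : ℕ} (g : (Fin d → ℝ) → ℂ) : ℝ :=
  ∫ ξ : Fin d → ℝ, (1 + l1 ξ) * Real.logb 2 (2 + l1 ξ) * ‖g ξ‖

/-- One hidden ReLU layer `z ↦ ReLU(Wz+b)`. -/
def reluLayer {N : ℕ} (W : Matrix (Fin N) (Fin N) ℝ) (b : Fin N → ℝ) (z : Fin N → ℝ) :
    Fin N → ℝ :=
  fun i => max 0 (W.mulVec z i + b i)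

/-- Iterate `k` hidden layers. -/
def hiddenIter {N : ℕ} (W : ℕ → Matrix (Fin N) (Fin N) ℝ) (b : ℕ → Fin N → ℝ) :
    ℕ → (Fin N → ℝ) → (Fin N → ℝ)
  | 0, z => z
  | k + 1, z => reluLayer (W k) (b k) (hiddenIter W b k z)

/-- `F : ℝ^d → ℝ` is a ReLU network of width `N` and depth `L`:
`F(x) = W_L z_{L-1}`, `z₀ = x`, `z_l = ReLU(W_l z_{l-1} + b_l)` for `1 ≤ l ≤ L-1`. -/
def IsReLUNet (d N L : ℕ) (F : (Fin d → ℝ) → ℝ) : Prop :=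
  ∃ (W₁ : Matrix (Fin N) (Fin d) ℝ) (b₁ : Fin N → ℝ)
    (W : ℕ → Matrix (Fin N) (Fin N) ℝ) (b : ℕ → Fin N → ℝ) (Wout : Fin N → ℝ),
    ∀ x, F x = ∑ i, Wout i *
      hiddenIter W b (L - 2) (fun j => max 0 (W₁.mulVec x j + b₁ j)) i

/-- `v` is the `j`-th weak partial derivative of `u` on `Ω`. -/
def HasWeakPartial {d : ℕ} (Ω : Set (Fin d → ℝ)) (u : (Fin d → ℝ) → ℝ) (j : Fin d)
    (v : (Fin d → ℝ) → ℝ) : Prop :=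
  ∀ φ : (Fin d → ℝ) → ℝ, ContDiff ℝ (⊤ : ℕ∞) φ → HasCompactSupport φ → tsupport φ ⊆ interior Ω →
    ∫ x in Ω, u x * fderiv ℝ φ x (Pi.single j 1) = - ∫ x in Ω, v x * φ x

/-- Euclidean diameter of a set in `ℝ^d`. -/
def eucDiam {d : ℕ} (Ω : Set (Fin d → ℝ)) : ℝ :=
  sSup {r : ℝ | ∃ x ∈ Ω, ∃ y ∈ Ω, r = Real.sqrt (∑ i, (x i - y i) ^ 2)}


/-- Pointwise bound: `log₂(2+‖ξ‖₁)² / (1+‖ξ‖²)^s ≤ c₀ (1+‖ξ‖)^{-(s+d/2)}`. -/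
lemma logb_sq_div_le (d : ℕ) (s : ℝ) (hs : (d : ℝ) / 2 < s) :
    ∃ c₀ : ℝ, 0 < c₀ ∧ ∀ ξ : Fin d → ℝ,
      Real.logb 2 (2 + l1 ξ) ^ 2 / (1 + ∑ i, (ξ i) ^ 2) ^ s
        ≤ c₀ * (1 + ‖ξ‖) ^ (-(s + (d : ℝ) / 2)) := by
  have hd0 : (0 : ℝ) ≤ (d : ℝ) / 2 := by positivity
  have hs0 : 0 < s := lt_of_le_of_lt hd0 hs
  set ε : ℝ := (s - (d : ℝ) / 2) / 2 with hεdef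
  have hε : 0 < ε := by simp only [hεdef]; linarith
  have hlog2 : (0 : ℝ) < Real.log 2 := Real.log_pos one_lt_two
  set c₁ : ℝ := (2 + (d : ℝ)) ^ ε / (ε * Real.log 2) with hc₁def
  have hc₁ : 0 < c₁ := by
    apply div_pos (Real.rpow_pos_of_pos (by positivity) _) (by positivity)
  refine ⟨c₁ ^ 2 * 2 ^ s, by positivity, fun ξ => ?_⟩
  set t : ℝ := ‖ξ‖ with htdef
  have ht0 : (0 : ℝ) ≤ t := norm_nonneg _
  have hl1' : 0 ≤ l1 ξ := Finset.sum_nonneg fun i _ => abs_nonneg _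
  have hl1 : l1 ξ ≤ d * t := by
    unfold l1
    calc ∑ i, |ξ i| ≤ ∑ _i : Fin d, t := by
          refine Finset.sum_le_sum fun i _ => ?_
          simpa [Real.norm_eq_abs] using norm_le_pi_norm ξ i
      _ = d * t := by simp [Finset.sum_const, nsmul_eq_mul]
  have hw0 : 0 ≤ Real.logb 2 (2 + l1 ξ) := Real.logb_nonneg one_lt_two (by linarith)
  have hw : Real.logb 2 (2 + l1 ξ) ≤ c₁ * (1 + t) ^ ε := by
    have h1 : Real.log (2 + l1 ξ) ≤ (2 + l1 ξ) ^ ε / ε :=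
      Real.log_le_rpow_div (by linarith) hε
    have h2 : (2 + l1 ξ) ^ ε ≤ ((2 + (d : ℝ)) * (1 + t)) ^ ε := by
      apply Real.rpow_le_rpow (by linarith) _ hε.le
      nlinarith
    have h3 : ((2 + (d : ℝ)) * (1 + t)) ^ ε = (2 + (d : ℝ)) ^ ε * (1 + t) ^ ε :=
      Real.mul_rpow (by positivity) (by linarith)
    rw [Real.logb]
    rw [div_le_iff₀ hlog2]
    have : (2 + l1 ξ) ^ ε / ε ≤ (2 + (d : ℝ)) ^ ε * (1 + t) ^ ε / ε := by
      gcongr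
      rw [← h3]; exact h2
    calc Real.log (2 + l1 ξ) ≤ (2 + (d : ℝ)) ^ ε * (1 + t) ^ ε / ε := le_trans h1 this
      _ = c₁ * (1 + t) ^ ε * Real.log 2 := by
          rw [hc₁def]; field_simp
  have hSnn : (0 : ℝ) ≤ ∑ i, (ξ i) ^ 2 := Finset.sum_nonneg fun i _ => sq_nonneg _
  have hS : t ^ 2 ≤ ∑ i, (ξ i) ^ 2 := by
    have habs : ∀ i, |ξ i| ≤ Real.sqrt (∑ j, (ξ j) ^ 2) := fun i => by
      rw [← Real.sqrt_sq_eq_abs]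
      exact Real.sqrt_le_sqrt (Finset.single_le_sum (fun j _ => sq_nonneg (ξ j))
        (Finset.mem_univ i))
    have ht : t ≤ Real.sqrt (∑ j, (ξ j) ^ 2) := by
      rw [htdef]
      apply (pi_norm_le_iff_of_nonneg (Real.sqrt_nonneg _)).mpr
      intro i; simpa [Real.norm_eq_abs] using habs i
    calc t ^ 2 ≤ Real.sqrt (∑ j, (ξ j) ^ 2) ^ 2 := by
          exact pow_le_pow_left₀ ht0 ht 2
      _ = ∑ j, (ξ j) ^ 2 := Real.sq_sqrt hSnn
  have hp : (1 + t) ^ (2 * s) ≤ 2 ^ s * (1 + ∑ i, (ξ i) ^ 2) ^ s := by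
    have h4 : (1 + t) ^ (2 : ℝ) ≤ 2 * (1 + ∑ i, (ξ i) ^ 2) := by
      rw [Real.rpow_two]; nlinarith [sq_nonneg (t - 1), hS]
    calc (1 + t) ^ (2 * s) = ((1 + t) ^ (2 : ℝ)) ^ s := by
          rw [← Real.rpow_mul (by linarith)]
      _ ≤ (2 * (1 + ∑ i, (ξ i) ^ 2)) ^ s :=
          Real.rpow_le_rpow (by positivity) h4 hs0.le
      _ = 2 ^ s * (1 + ∑ i, (ξ i) ^ 2) ^ s := Real.mul_rpow (by norm_num) (by positivity)
  have hppos : 0 < (1 + ∑ i, (ξ i) ^ 2) ^ s := Real.rpow_pos_of_pos (by positivity) s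
  rw [div_le_iff₀ hppos]
  have hw2 : Real.logb 2 (2 + l1 ξ) ^ 2 ≤ c₁ ^ 2 * (1 + t) ^ (2 * ε) := by
    have := pow_le_pow_left₀ hw0 hw 2
    calc Real.logb 2 (2 + l1 ξ) ^ 2 ≤ (c₁ * (1 + t) ^ ε) ^ 2 := this
      _ = c₁ ^ 2 * (1 + t) ^ (2 * ε) := by
          rw [mul_pow]
          congr 1
          rw [← Real.rpow_natCast ((1 + t) ^ ε) 2,
            ← Real.rpow_mul (by linarith : (0:ℝ) ≤ 1 + t)]
          norm_num [mul_comm]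
  have key : (1 + t) ^ (-(s + (d : ℝ) / 2)) * (1 + t) ^ (2 * s) = (1 + t) ^ (2 * ε) := by
    rw [← Real.rpow_add (by linarith)]
    congr 1
    rw [hεdef]; ring
  calc Real.logb 2 (2 + l1 ξ) ^ 2 ≤ c₁ ^ 2 * (1 + t) ^ (2 * ε) := hw2
    _ = c₁ ^ 2 * ((1 + t) ^ (-(s + (d : ℝ) / 2)) * (1 + t) ^ (2 * s)) := by rw [key]
    _ ≤ c₁ ^ 2 * ((1 + t) ^ (-(s + (d : ℝ) / 2)) * (2 ^ s * (1 + ∑ i, (ξ i) ^ 2) ^ s)) := by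
        have h5 : (0 : ℝ) ≤ (1 + t) ^ (-(s + (d : ℝ) / 2)) :=
          (Real.rpow_pos_of_pos (by linarith) _).le
        gcongr
    _ = c₁ ^ 2 * 2 ^ s * (1 + t) ^ (-(s + (d : ℝ) / 2)) * (1 + ∑ i, (ξ i) ^ 2) ^ s := by
        ring

/-- If `s > d/2` then `H^s(ℝ^d)` embeds continuously into the log-Barron
space.  Stated on the frequency side: `g` plays the role of the Fourier–Plancherel transform
`f̂` of `f ∈ L²`, the hypothesis is finiteness of the `H^s` norm
`(∫ (1+‖ξ‖²)^s |f̂(ξ)|² dξ)^{1/2}`, and the conclusion is `f̂ ∈ L¹` together with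
`‖f‖_{B^log} ≤ C ‖f‖_{H^s}`. -/
theorem hs_embeds_logBarron (d : ℕ) (s : ℝ) (hs : (d : ℝ) / 2 < s) :
    ∃ C : ℝ, 0 < C ∧ ∀ g : (Fin d → ℝ) → ℂ, AEMeasurable g volume →
      (∫⁻ ξ : Fin d → ℝ, ENNReal.ofReal ((1 + ∑ i, (ξ i) ^ 2) ^ s * ‖g ξ‖ ^ 2)) < ⊤ →
      Integrable g ∧
        logBarron g ≤ C * Real.sqrt
          (∫⁻ ξ : Fin d → ℝ, ENNReal.ofReal ((1 + ∑ i, (ξ i) ^ 2) ^ s * ‖g ξ‖ ^ 2)).toReal := by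
  obtain ⟨c₀, hc₀, hpt⟩ := logb_sq_div_le d s hs
  have hd0 : (0 : ℝ) ≤ (d : ℝ) / 2 := by positivity
  have hs0 : 0 < s := lt_of_le_of_lt hd0 hs
  -- the weight and Japanese bracket
  set w : (Fin d → ℝ) → ℝ := fun ξ => Real.logb 2 (2 + l1 ξ) with hwdef
  set p : (Fin d → ℝ) → ℝ := fun ξ => (1 + ∑ i, (ξ i) ^ 2) ^ s with hpdef
  have hpbase : ∀ ξ : Fin d → ℝ, (0:ℝ) < 1 + ∑ i, (ξ i) ^ 2 := fun ξ => by
    have : (0 : ℝ) ≤ ∑ i, (ξ i) ^ 2 := Finset.sum_nonneg fun i _ => sq_nonneg _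
    linarith
  have hppos : ∀ ξ, 0 < p ξ := fun ξ => Real.rpow_pos_of_pos (hpbase ξ) s
  have hl1nn : ∀ ξ : Fin d → ℝ, 0 ≤ l1 ξ := fun ξ =>
    Finset.sum_nonneg fun i _ => abs_nonneg _
  have hw1 : ∀ ξ, (1:ℝ) ≤ w ξ := fun ξ => by
    have h2 : (2:ℝ) ≤ 2 + l1 ξ := by have := hl1nn ξ; linarith
    calc (1:ℝ) = Real.logb 2 2 := (Real.logb_self_eq_one one_lt_two).symm
      _ ≤ Real.logb 2 (2 + l1 ξ) := Real.logb_le_logb_of_le one_lt_two (by norm_num) h2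
  have hw0 : ∀ ξ, (0:ℝ) ≤ w ξ := fun ξ => le_trans zero_le_one (hw1 ξ)
  -- measurability
  have hl1meas : Measurable (l1 (d := d)) := by
    unfold l1
    exact Finset.measurable_sum _ fun i _ => (measurable_pi_apply i).abs
  have hwmeas : Measurable w := by
    have : w = fun ξ => Real.log (2 + l1 ξ) / Real.log 2 := by
      funext ξ; simp only [hwdef, Real.logb]
    rw [this]
    exact (Real.measurable_log.comp (measurable_const.add hl1meas)).div_const _
  have hbmeas : Measurable fun ξ : Fin d → ℝ => 1 + ∑ i, (ξ i) ^ 2 :=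
    measurable_const.add (Finset.measurable_sum _ fun i _ => (measurable_pi_apply i).pow_const 2)
  have hpcont : Continuous p := by
    have hbc : Continuous fun ξ : Fin d → ℝ => 1 + ∑ i, (ξ i) ^ 2 :=
      continuous_const.add (continuous_finset_sum _ fun i _ => (continuous_apply i).pow 2)
    exact hbc.rpow_const fun ξ => Or.inr hs0.le
  have hpmeas : Measurable p := hpcont.measurable
  have hqmeas : Measurable fun ξ => Real.sqrt (p ξ) := hpmeas.sqrt
  -- the constant K
  set K : ENNReal := ∫⁻ ξ : Fin d → ℝ, ENNReal.ofReal (w ξ ^ 2 / p ξ) with hKdef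
  have hd : ((Module.finrank ℝ (Fin d → ℝ)) : ℝ) < s + (d : ℝ) / 2 := by
    rw [Module.finrank_fin_fun]
    linarith
  have hint : Integrable (fun ξ : Fin d → ℝ => c₀ * (1 + ‖ξ‖) ^ (-(s + (d : ℝ) / 2))) volume :=
    (integrable_one_add_norm hd).const_mul c₀
  have hK : K < ⊤ := by
    refine lt_of_le_of_lt (lintegral_mono fun ξ => ENNReal.ofReal_le_ofReal (hpt ξ)) ?_
    exact hint.lintegral_lt_top
  refine ⟨Real.sqrt K.toReal + 1, by positivity, fun g hg hM => ?_⟩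
  set M : ENNReal := ∫⁻ ξ : Fin d → ℝ, ENNReal.ofReal ((1 + ∑ i, (ξ i) ^ 2) ^ s * ‖g ξ‖ ^ 2)
    with hMdef
  -- Cauchy–Schwarz
  have hF : AEMeasurable (fun ξ => ENNReal.ofReal (w ξ / Real.sqrt (p ξ))) volume :=
    ((hwmeas.div hqmeas).ennreal_ofReal).aemeasurable
  have hG : AEMeasurable (fun ξ => ENNReal.ofReal (Real.sqrt (p ξ) * ‖g ξ‖)) volume :=
    ENNReal.measurable_ofReal.comp_aemeasurable (hqmeas.aemeasurable.mul hg.norm)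
  have hpq : Real.HolderConjugate 2 2 := Real.holderConjugate_iff.mpr ⟨one_lt_two, by norm_num⟩
  have hCS := ENNReal.lintegral_mul_le_Lp_mul_Lq volume hpq hF hG
  have hqpos : ∀ ξ, 0 < Real.sqrt (p ξ) := fun ξ => Real.sqrt_pos.mpr (hppos ξ)
  have key : (∫⁻ ξ, ENNReal.ofReal (w ξ * ‖g ξ‖)) ≤ K ^ (1/2 : ℝ) * M ^ (1/2 : ℝ) := by
    have e1 : (∫⁻ ξ, ENNReal.ofReal (w ξ * ‖g ξ‖)) =
        ∫⁻ ξ, ((fun ξ => ENNReal.ofReal (w ξ / Real.sqrt (p ξ))) *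
          fun ξ => ENNReal.ofReal (Real.sqrt (p ξ) * ‖g ξ‖)) ξ := by
      refine lintegral_congr fun ξ => ?_
      simp only [Pi.mul_apply]
      rw [← ENNReal.ofReal_mul (div_nonneg (hw0 ξ) (Real.sqrt_nonneg _))]
      congr 1
      rw [div_mul_eq_mul_div, eq_div_iff (hqpos ξ).ne']
      ring
    have e2 : (∫⁻ ξ, ENNReal.ofReal (w ξ / Real.sqrt (p ξ)) ^ (2:ℝ)) = K := by
      refine lintegral_congr fun ξ => ?_
      rw [ENNReal.ofReal_rpow_of_nonneg (div_nonneg (hw0 ξ) (Real.sqrt_nonneg _))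
        (by norm_num : (0:ℝ) ≤ 2)]
      congr 1
      rw [Real.rpow_two, div_pow, Real.sq_sqrt (hppos ξ).le]
    have e3 : (∫⁻ ξ, ENNReal.ofReal (Real.sqrt (p ξ) * ‖g ξ‖) ^ (2:ℝ)) = M := by
      refine lintegral_congr fun ξ => ?_
      rw [ENNReal.ofReal_rpow_of_nonneg (mul_nonneg (Real.sqrt_nonneg _) (norm_nonneg _))
        (by norm_num : (0:ℝ) ≤ 2)]
      congr 1
      rw [Real.rpow_two, mul_pow, Real.sq_sqrt (hppos ξ).le]
    calc (∫⁻ ξ, ENNReal.ofReal (w ξ * ‖g ξ‖)) = _ := e1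
      _ ≤ (∫⁻ ξ, ENNReal.ofReal (w ξ / Real.sqrt (p ξ)) ^ (2:ℝ)) ^ (1/2:ℝ) *
          (∫⁻ ξ, ENNReal.ofReal (Real.sqrt (p ξ) * ‖g ξ‖) ^ (2:ℝ)) ^ (1/2:ℝ) := hCS
      _ = K ^ (1/2:ℝ) * M ^ (1/2:ℝ) := by rw [e2, e3]
  have hKM : K ^ (1/2 : ℝ) * M ^ (1/2 : ℝ) < ⊤ := by
    apply ENNReal.mul_lt_top <;>
      exact ENNReal.rpow_lt_top_of_nonneg (by norm_num) (by first | exact hK.ne | exact hM.ne)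
  -- integrability of g
  have hgint : Integrable g volume := by
    refine ⟨hg.aestronglyMeasurable, ?_⟩
    rw [hasFiniteIntegral_iff_norm]
    refine lt_of_le_of_lt (lintegral_mono fun ξ => ENNReal.ofReal_le_ofReal ?_)
      (lt_of_le_of_lt key hKM)
    exact le_mul_of_one_le_left (norm_nonneg _) (hw1 ξ)
  refine ⟨hgint, ?_⟩
  -- the logBarron bound
  have hwg_meas : AEStronglyMeasurable (fun ξ => w ξ * ‖g ξ‖) volume :=
    (hwmeas.aemeasurable.mul hg.norm).aestronglyMeasurable
  have heq : logBarron g = (∫⁻ ξ, ENNReal.ofReal (w ξ * ‖g ξ‖)).toReal := by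
    unfold logBarron
    exact integral_eq_lintegral_of_nonneg_ae
      (ae_of_all _ fun ξ => mul_nonneg (hw0 ξ) (norm_nonneg _)) hwg_meas
  rw [heq]
  have h1 : (∫⁻ ξ, ENNReal.ofReal (w ξ * ‖g ξ‖)).toReal ≤
      (K ^ (1/2:ℝ) * M ^ (1/2:ℝ)).toReal := ENNReal.toReal_mono hKM.ne key
  refine le_trans h1 ?_
  rw [ENNReal.toReal_mul, ← ENNReal.toReal_rpow, ← ENNReal.toReal_rpow]
  rw [← Real.sqrt_eq_rpow, ← Real.sqrt_eq_rpow]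
  have h2 : (0:ℝ) ≤ Real.sqrt M.toReal := Real.sqrt_nonneg _
  nlinarith [Real.sqrt_nonneg K.toReal]

end
end

section
/- For every dimension d ∈ ℕ and every s with 0 ≤ s ≤ d/2, there exists f ∈ L²(ℝ^d) with ‖f‖_{H^s} < ∞ but ∫_{ℝ^d} log₂(2+‖ξ‖₁)|f̂(ξ)| dξ = ∞; that is, H^s(ℝ^d) is not contained in the log-Barron space when s ≤ d/2. One such f is given by choosing f̂ = ∑_{k≥1} c_k 𝟙_{A_k} with c_k = 2^{−(d/2+s)k}/k on the dyadic shells A_k = {ξ ∈ ℝ^d : 2^k ≤ ‖ξ‖ < 2^{k+1}}. -/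
open MeasureTheory Real Filter

noncomputable section

namespace HsAux

def K (r : ℝ) : ℕ := (⌊Real.logb 2 r⌋).toNat

lemma K_zero {r : ℝ} (h0 : 0 ≤ r) (h : r < 1) : K r = 0 := by
  rcases eq_or_lt_of_le h0 with h0 | h0
  · simp [K, ← h0]
  · have hneg : Real.logb 2 r < 0 := Real.logb_neg one_lt_two h0 h
    have : ⌊Real.logb 2 r⌋ ≤ 0 := Int.floor_nonpos hneg.le
    simp [K, Int.toNat_of_nonpos this]

lemma K_cast {r : ℝ} (h : 1 ≤ r) : ((K r : ℝ)) = (⌊Real.logb 2 r⌋ : ℝ) := by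
  have hfl0 : (0:ℤ) ≤ ⌊Real.logb 2 r⌋ :=
    Int.floor_nonneg.2 (Real.logb_nonneg one_lt_two h)
  simp only [K]
  exact_mod_cast congrArg (Int.cast : ℤ → ℝ) (Int.toNat_of_nonneg hfl0)

lemma K_lt {r : ℝ} (h0 : 0 ≤ r) : r < 2 ^ (K r + 1) := by
  rcases lt_or_ge r 1 with h | h
  · rw [K_zero h0 h]
    calc r < 1 := h
    _ ≤ 2 ^ (0 + 1) := by norm_num
  · have hrpos : 0 < r := lt_of_lt_of_le one_pos h
    have h2 : Real.logb 2 r < (K r : ℝ) + 1 := by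
      rw [K_cast h]; exact Int.lt_floor_add_one _
    have h3 : r < (2:ℝ) ^ ((K r : ℝ) + 1) :=
      (Real.logb_lt_iff_lt_rpow one_lt_two hrpos).1 h2
    calc r < (2:ℝ) ^ ((K r : ℝ) + 1) := h3
    _ = (2:ℝ) ^ (((K r + 1 : ℕ) : ℝ)) := by push_cast; ring_nf
    _ = 2 ^ (K r + 1) := Real.rpow_natCast 2 _

lemma K_le {r : ℝ} (h0 : 0 ≤ r) (h : 1 ≤ K r) : (2:ℝ) ^ K r ≤ r := by
  rcases lt_or_ge r 1 with hr | hr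
  · rw [K_zero h0 hr] at h; omega
  · have hrpos : 0 < r := lt_of_lt_of_le one_pos hr
    have h1 : (K r : ℝ) ≤ Real.logb 2 r := by
      rw [K_cast hr]; exact Int.floor_le _
    have := (Real.le_logb_iff_rpow_le one_lt_two hrpos).1 h1
    rwa [Real.rpow_natCast] at this

lemma K_eq {k : ℕ} (hk : 1 ≤ k) {r : ℝ} (h1 : (2:ℝ) ^ k ≤ r) (h2 : r < 2 ^ (k + 1)) :
    K r = k := by
  have hrpos : 0 < r := lt_of_lt_of_le (by positivity) h1
  have hl : (k : ℝ) ≤ Real.logb 2 r :=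
    (Real.le_logb_iff_rpow_le one_lt_two hrpos).2 (by rwa [Real.rpow_natCast])
  have hu : Real.logb 2 r < (k : ℝ) + 1 := by
    refine (Real.logb_lt_iff_lt_rpow one_lt_two hrpos).2 ?_
    calc r < 2 ^ (k + 1) := h2
    _ = (2:ℝ) ^ (((k + 1 : ℕ) : ℝ)) := (Real.rpow_natCast 2 _).symm
    _ = (2:ℝ) ^ ((k : ℝ) + 1) := by push_cast; ring_nf
  have hfl : ⌊Real.logb 2 r⌋ = (k : ℤ) := by
    rw [Int.floor_eq_iff]
    exact ⟨by exact_mod_cast hl, by push_cast; exact hu⟩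
  simp [K, hfl]

lemma K_measurable : Measurable K := by
  have h1 : Measurable fun r : ℝ => Real.logb 2 r := by
    simpa [Real.logb] using Real.measurable_log.div_const (Real.log 2)
  exact measurable_from_top.comp (Int.measurable_floor.comp h1)

end HsAux

open HsAux

/-- For every `d ≥ 1` and `0 ≤ s ≤ d/2` there is `f ∈ L²(ℝ^d)` with
`‖f‖_{H^s} < ∞` but infinite log-Barron norm; stated on the frequency side with `g = f̂`
(the Fourier–Plancherel transform): `g` is square-integrable with
`∫ (1+‖ξ‖²)^s |g(ξ)|² dξ < ∞` while `∫ log₂(2+‖ξ‖₁)|g(ξ)| dξ = ∞`. -/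
theorem hs_not_subset_logBarron (d : ℕ) (hd : 0 < d) (s : ℝ) (hs0 : 0 ≤ s)
    (hs : s ≤ (d : ℝ) / 2) :
    ∃ g : (Fin d → ℝ) → ℂ, AEMeasurable g volume ∧
      (∫⁻ ξ : Fin d → ℝ, ENNReal.ofReal ((1 + ∑ i, (ξ i) ^ 2) ^ s * ‖g ξ‖ ^ 2)) < ⊤ ∧
      (∫⁻ ξ : Fin d → ℝ, ENNReal.ofReal (Real.logb 2 (2 + l1 ξ) * ‖g ξ‖)) = ⊤ := by
  classical
  set a : ℝ := (d : ℝ) / 2 + s with ha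
  set c : ℕ → ℝ := fun k => (2:ℝ) ^ (-(a * k)) / k with hcdef
  have hcnn : ∀ k, 0 ≤ c k := fun k =>
    div_nonneg (Real.rpow_nonneg (by norm_num) _) (Nat.cast_nonneg k)
  have hc0 : c 0 = 0 := by simp [hcdef]
  set g : (Fin d → ℝ) → ℂ := fun ξ => ((c (K ‖ξ‖) : ℝ) : ℂ) with hgdef
  have hgm : Measurable g := by
    refine Complex.measurable_ofReal.comp ?_
    exact (measurable_from_nat (f := c)).comp (K_measurable.comp measurable_norm)
  have hnormg : ∀ ξ, ‖g ξ‖ = c (K ‖ξ‖) := by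
    intro ξ
    simp [hgdef, Complex.norm_real, Real.norm_eq_abs, abs_of_nonneg (hcnn _)]
  -- partition
  set P : ℕ → Set (Fin d → ℝ) := fun k => {ξ | K ‖ξ‖ = k} with hPdef
  have hPm : ∀ k, MeasurableSet (P k) := fun k =>
    (K_measurable.comp measurable_norm) (measurableSet_singleton k)
  have hPd : Pairwise (Function.onFun Disjoint P) := by
    intro i j hij
    simp only [Function.onFun, Set.disjoint_left]
    rintro ξ (hi : K ‖ξ‖ = i) (hj : K ‖ξ‖ = j)
    exact hij (hi ▸ hj)
  have hPu : (⋃ k, P k) = Set.univ := by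
    ext ξ; simp only [Set.mem_iUnion, Set.mem_univ, iff_true]
    exact ⟨K ‖ξ‖, rfl⟩
  have hsplit : ∀ F : (Fin d → ℝ) → ENNReal,
      (∫⁻ ξ, F ξ) = ∑' k, ∫⁻ ξ in P k, F ξ := by
    intro F
    rw [← setLIntegral_univ, ← hPu, lintegral_iUnion hPm hPd]
  -- volume bounds
  have hvol_up : ∀ k, volume (P k) ≤ ENNReal.ofReal ((2:ℝ) ^ ((k + 2) * d)) := by
    intro k
    have hsub : P k ⊆ Metric.ball 0 ((2:ℝ) ^ (k + 1)) := by
      intro ξ hξ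
      have hlt := K_lt (norm_nonneg ξ)
      rw [show K ‖ξ‖ = k from hξ] at hlt
      simpa [mem_ball_zero_iff] using hlt
    refine le_trans (measure_mono hsub) ?_
    · rw [Real.volume_pi_ball _ (by positivity)]
      refine ENNReal.ofReal_le_ofReal (le_of_eq ?_)
      rw [Fintype.card_fin, show 2 * (2:ℝ) ^ (k + 1) = 2 ^ (k + 2) by ring, ← pow_mul]
  have hvol_low : ∀ k, 1 ≤ k →
      ENNReal.ofReal ((2:ℝ) ^ ((k + 1) * d)) ≤ volume (P k) := by
    intro k hk
    have hsub : Metric.ball (0 : Fin d → ℝ) ((2:ℝ) ^ (k + 1)) \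
        Metric.ball 0 ((2:ℝ) ^ k) ⊆ P k := by
      rintro ξ ⟨h1, h2⟩
      rw [mem_ball_zero_iff] at h1
      rw [Metric.mem_ball, not_lt] at h2
      simp only [dist_zero_right] at h2
      exact K_eq hk h2 h1
    calc ENNReal.ofReal ((2:ℝ) ^ ((k + 1) * d))
        ≤ ENNReal.ofReal ((2:ℝ) ^ ((k + 2) * d) - (2:ℝ) ^ ((k + 1) * d)) := by
          refine ENNReal.ofReal_le_ofReal ?_
          have h1 : (k + 1) * d + 1 ≤ (k + 2) * d := by nlinarith [hd]
          have h2 : (2:ℝ) ^ ((k + 1) * d + 1) ≤ (2:ℝ) ^ ((k + 2) * d) :=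
            pow_le_pow_right₀ one_le_two h1
          rw [pow_succ] at h2
          linarith
      _ ≤ volume (Metric.ball (0 : Fin d → ℝ) ((2:ℝ) ^ (k + 1)) \
            Metric.ball 0 ((2:ℝ) ^ k)) := by
          rw [measure_diff (Metric.ball_subset_ball (by
              exact pow_le_pow_right₀ one_le_two (Nat.le_succ k)))
            measurableSet_ball.nullMeasurableSet
            (by rw [Real.volume_pi_ball _ (by positivity)]; exact ENNReal.ofReal_ne_top)]
          rw [Real.volume_pi_ball _ (by positivity), Real.volume_pi_ball _ (by positivity)]
          rw [← ENNReal.ofReal_sub _ (by positivity)]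
          refine ENNReal.ofReal_le_ofReal ?_
          rw [Fintype.card_fin]
          have e1 : (2 * (2:ℝ) ^ (k + 1)) ^ d = (2:ℝ) ^ ((k + 2) * d) := by
            rw [show 2 * (2:ℝ) ^ (k+1) = 2 ^ (k+2) by ring, ← pow_mul]
          have e2 : (2 * (2:ℝ) ^ k) ^ d = (2:ℝ) ^ ((k + 1) * d) := by
            rw [show 2 * (2:ℝ) ^ k = 2 ^ (k+1) by ring, ← pow_mul]
          rw [e1, e2]
      _ ≤ volume (P k) := measure_mono hsub
  refine ⟨g, hgm.aemeasurable, ?_, ?_⟩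
  · -- finiteness of the H^s integral
    set C : ℝ := (8 * (d:ℝ)) ^ s * 4 ^ d with hC
    have hCnn : 0 ≤ C := by positivity
    rw [hsplit]
    have hterm : ∀ k : ℕ,
        (∫⁻ ξ in P k, ENNReal.ofReal ((1 + ∑ i, (ξ i) ^ 2) ^ s * ‖g ξ‖ ^ 2))
          ≤ ENNReal.ofReal (C / (k:ℝ) ^ 2) := by
      intro k
      set M : ℝ := (8 * (d:ℝ) * 4 ^ k) ^ s * (c k) ^ 2 with hM
      have hMnn : 0 ≤ M := by
        refine mul_nonneg (Real.rpow_nonneg (by positivity) _) (sq_nonneg _)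
      have hpt : ∀ ξ ∈ P k,
          ENNReal.ofReal ((1 + ∑ i, (ξ i) ^ 2) ^ s * ‖g ξ‖ ^ 2) ≤ ENNReal.ofReal M := by
        intro ξ hξ
        have hξk : K ‖ξ‖ = k := hξ
        refine ENNReal.ofReal_le_ofReal ?_
        have hnlt : ‖ξ‖ < 2 ^ (k + 1) := by
          have := K_lt (norm_nonneg ξ); rwa [hξk] at this
        have hsum : ∑ i, (ξ i) ^ 2 ≤ (d:ℝ) * ((2:ℝ) ^ (k + 1)) ^ 2 := by
          calc ∑ i, (ξ i) ^ 2 ≤ ∑ _i : Fin d, ((2:ℝ) ^ (k + 1)) ^ 2 := by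
                refine Finset.sum_le_sum fun i _ => ?_
                have h1 : |ξ i| ≤ ‖ξ‖ := by
                  simpa [Real.norm_eq_abs] using norm_le_pi_norm ξ i
                calc (ξ i) ^ 2 = |ξ i| ^ 2 := (sq_abs _).symm
                _ ≤ ((2:ℝ) ^ (k + 1)) ^ 2 :=
                    pow_le_pow_left₀ (abs_nonneg _) (le_of_lt (lt_of_le_of_lt h1 hnlt)) 2
          _ = (d:ℝ) * ((2:ℝ) ^ (k + 1)) ^ 2 := by
                rw [Finset.sum_const, Finset.card_univ, Fintype.card_fin, nsmul_eq_mul]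
        have h4k : ((4:ℝ)) ^ k = ((2:ℝ) ^ k) ^ 2 := by
          rw [show (4:ℝ) = 2 ^ 2 by norm_num, pow_right_comm]
        have hX : (1:ℝ) ≤ (2:ℝ) ^ k := one_le_pow₀ one_le_two
        have hd1 : (1:ℝ) ≤ (d:ℝ) := by exact_mod_cast hd
        have hbase : 1 + ∑ i, (ξ i) ^ 2 ≤ 8 * (d:ℝ) * 4 ^ k := by
          have h2 : ((2:ℝ) ^ (k + 1)) ^ 2 = 4 * ((2:ℝ) ^ k) ^ 2 := by
            rw [pow_succ]; ring
          rw [h4k]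
          nlinarith [hsum, hX, hd1]
        have hrp : (1 + ∑ i, (ξ i) ^ 2) ^ s ≤ (8 * (d:ℝ) * 4 ^ k) ^ s := by
          refine Real.rpow_le_rpow ?_ hbase hs0
          positivity
        have hg2 : ‖g ξ‖ ^ 2 = (c k) ^ 2 := by rw [hnormg, hξk]
        rw [hM, hg2]
        refine mul_le_mul hrp le_rfl (sq_nonneg _) (Real.rpow_nonneg (by positivity) _)
      have h4dk : ∀ m : ℕ, ((4:ℝ)) ^ m = (2:ℝ) ^ (2 * (m:ℝ)) := by
        intro m
        rw [show (4:ℝ) = 2 ^ 2 by norm_num, ← pow_mul, ← Real.rpow_natCast (2:ℝ) (2 * m)]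
        push_cast; ring_nf
      have hnum : (8 * (d:ℝ) * 4 ^ k) ^ s * ((2:ℝ) ^ (-(a * (k:ℝ)))) ^ 2
          * (2:ℝ) ^ ((k + 2) * d) = (8 * (d:ℝ)) ^ s * 4 ^ d := by
        have h4s : (((4:ℝ)) ^ k) ^ s = (2:ℝ) ^ (2 * (k:ℝ) * s) := by
          rw [h4dk k, ← Real.rpow_mul (by norm_num : (0:ℝ) ≤ 2)]
        have hsq : ((2:ℝ) ^ (-(a * (k:ℝ)))) ^ 2 = (2:ℝ) ^ (-(a * (k:ℝ)) * 2) := by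
          rw [← Real.rpow_natCast ((2:ℝ) ^ (-(a * (k:ℝ)))) 2,
            ← Real.rpow_mul (by norm_num : (0:ℝ) ≤ 2)]
          norm_num
        have hnp : (2:ℝ) ^ ((k + 2) * d) = (2:ℝ) ^ (((k:ℝ) + 2) * (d:ℝ)) := by
          rw [← Real.rpow_natCast (2:ℝ) ((k + 2) * d)]
          push_cast; ring_nf
        have hmulrpow : (8 * (d:ℝ) * 4 ^ k) ^ s = (8 * (d:ℝ)) ^ s * ((4:ℝ) ^ k) ^ s :=
          Real.mul_rpow (by positivity) (by positivity)
        rw [hmulrpow, h4s, hsq, hnp, h4dk d]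
        have hcollect : (2:ℝ) ^ (2 * (k:ℝ) * s) * (2:ℝ) ^ (-(a * (k:ℝ)) * 2)
            * (2:ℝ) ^ (((k:ℝ) + 2) * (d:ℝ)) = (2:ℝ) ^ (2 * (d:ℝ)) := by
          rw [← Real.rpow_add two_pos, ← Real.rpow_add two_pos]
          congr 1
          rw [ha]; ring
        calc (8 * (d:ℝ)) ^ s * (2:ℝ) ^ (2 * (k:ℝ) * s) * (2:ℝ) ^ (-(a * (k:ℝ)) * 2)
            * (2:ℝ) ^ (((k:ℝ) + 2) * (d:ℝ))
            = (8 * (d:ℝ)) ^ s * ((2:ℝ) ^ (2 * (k:ℝ) * s) * (2:ℝ) ^ (-(a * (k:ℝ)) * 2)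
              * (2:ℝ) ^ (((k:ℝ) + 2) * (d:ℝ))) := by ring
        _ = (8 * (d:ℝ)) ^ s * (2:ℝ) ^ (2 * (d:ℝ)) := by rw [hcollect]
      have hkey : M * 2 ^ ((k + 2) * d) = C / (k:ℝ) ^ 2 := by
        rw [hM, hC, hcdef]
        simp only [div_pow]
        calc (8 * (d:ℝ) * 4 ^ k) ^ s * (((2:ℝ) ^ (-(a * (k:ℝ)))) ^ 2 / ((k:ℝ)) ^ 2)
            * (2:ℝ) ^ ((k + 2) * d)
            = ((8 * (d:ℝ) * 4 ^ k) ^ s * ((2:ℝ) ^ (-(a * (k:ℝ)))) ^ 2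
              * (2:ℝ) ^ ((k + 2) * d)) / ((k:ℝ)) ^ 2 := by ring
        _ = ((8 * (d:ℝ)) ^ s * 4 ^ d) / ((k:ℝ)) ^ 2 := by rw [hnum]
      calc (∫⁻ ξ in P k, ENNReal.ofReal ((1 + ∑ i, (ξ i) ^ 2) ^ s * ‖g ξ‖ ^ 2))
          ≤ ∫⁻ _ in P k, ENNReal.ofReal M := setLIntegral_mono' (hPm k) hpt
      _ = ENNReal.ofReal M * volume (P k) := setLIntegral_const _ _
      _ ≤ ENNReal.ofReal M * ENNReal.ofReal ((2:ℝ) ^ ((k + 2) * d)) :=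
          mul_le_mul_right (hvol_up k) _
      _ = ENNReal.ofReal (M * 2 ^ ((k + 2) * d)) := (ENNReal.ofReal_mul hMnn).symm
      _ ≤ ENNReal.ofReal (C / (k:ℝ) ^ 2) := ENNReal.ofReal_le_ofReal (le_of_eq hkey)
    refine lt_of_le_of_lt (ENNReal.tsum_le_tsum hterm) ?_
    have hsummable : Summable (fun k : ℕ => C / (k:ℝ) ^ 2) := by
      have h2 := (Real.summable_one_div_nat_pow.2 (by norm_num : 1 < 2)).mul_left C
      refine h2.congr fun n => ?_
      rw [mul_one_div]
    rw [← ENNReal.ofReal_tsum_of_nonneg (fun k => div_nonneg hCnn (sq_nonneg _)) hsummable]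
    exact ENNReal.ofReal_lt_top
  · -- divergence of the log-Barron integral
    rw [hsplit]
    have hterm : ∀ k : ℕ, 1 ≤ k →
        (1:ENNReal) ≤ ∫⁻ ξ in P k, ENNReal.ofReal (Real.logb 2 (2 + l1 ξ) * ‖g ξ‖) := by
      intro k hk
      have hkpos : (0:ℝ) < k := by exact_mod_cast hk
      have hck : (k:ℝ) * c k = (2:ℝ) ^ (-(a * (k:ℝ))) := by
        rw [hcdef]; field_simp
      have hkcnn : 0 ≤ (k:ℝ) * c k := mul_nonneg (Nat.cast_nonneg k) (hcnn k)
      have hreal : (1:ℝ) ≤ (k:ℝ) * c k * 2 ^ ((k + 1) * d) := by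
        rw [hck, ← Real.rpow_natCast (2:ℝ) ((k + 1) * d), ← Real.rpow_add two_pos]
        calc (1:ℝ) = 2 ^ (0:ℝ) := (Real.rpow_zero 2).symm
        _ ≤ _ := by
            refine Real.rpow_le_rpow_of_exponent_le one_le_two ?_
            push_cast
            have h1 : 0 ≤ ((d:ℝ) / 2 - s) * k :=
              mul_nonneg (by linarith) (Nat.cast_nonneg k)
            have h2 : (1:ℝ) ≤ (d:ℝ) := by exact_mod_cast hd
            rw [ha]; nlinarith
      have hpt : ∀ ξ ∈ P k, ENNReal.ofReal ((k:ℝ) * c k)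
          ≤ ENNReal.ofReal (Real.logb 2 (2 + l1 ξ) * ‖g ξ‖) := by
        intro ξ hξ
        have hξk : K ‖ξ‖ = k := hξ
        refine ENNReal.ofReal_le_ofReal ?_
        have hl1 : (0:ℝ) ≤ l1 ξ := Finset.sum_nonneg fun i _ => abs_nonneg _
        have hn2k : (2:ℝ) ^ k ≤ ‖ξ‖ := by
          have h := K_le (norm_nonneg ξ) (by rw [hξk]; exact hk)
          rwa [hξk] at h
        have hnle : ‖ξ‖ ≤ l1 ξ := by
          refine (pi_norm_le_iff_of_nonneg hl1).2 fun i => ?_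
          rw [Real.norm_eq_abs]
          exact Finset.single_le_sum (fun j _ => abs_nonneg (ξ j)) (Finset.mem_univ i)
        have hlogb : (k:ℝ) ≤ Real.logb 2 (2 + l1 ξ) := by
          have h2k : (2:ℝ) ^ k ≤ 2 + l1 ξ := by linarith [hn2k.trans hnle]
          have hlb : Real.logb 2 ((2:ℝ) ^ k) = (k:ℝ) := by
            rw [Real.logb_pow, Real.logb_self_eq_one one_lt_two, mul_one]
          calc (k:ℝ) = Real.logb 2 ((2:ℝ) ^ k) := hlb.symm
          _ ≤ Real.logb 2 (2 + l1 ξ) :=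
              Real.logb_le_logb_of_le one_lt_two (by positivity) h2k
        rw [hnormg, hξk]
        exact mul_le_mul hlogb le_rfl (hcnn k) (le_trans (Nat.cast_nonneg k) hlogb)
      calc (1:ENNReal) = ENNReal.ofReal 1 := by simp
      _ ≤ ENNReal.ofReal ((k:ℝ) * c k * 2 ^ ((k + 1) * d)) := ENNReal.ofReal_le_ofReal hreal
      _ = ENNReal.ofReal ((k:ℝ) * c k) * ENNReal.ofReal ((2:ℝ) ^ ((k + 1) * d)) := by
          rw [← ENNReal.ofReal_mul hkcnn]
      _ ≤ ENNReal.ofReal ((k:ℝ) * c k) * volume (P k) := mul_le_mul_right (hvol_low k hk) _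
      _ = ∫⁻ _ in P k, ENNReal.ofReal ((k:ℝ) * c k) := (setLIntegral_const _ _).symm
      _ ≤ _ := setLIntegral_mono' (hPm k) hpt
    refine top_le_iff.1 ?_
    calc (⊤:ENNReal) = ∑' _ : ℕ, (1:ENNReal) :=
        (ENNReal.tsum_const_eq_top_of_ne_zero one_ne_zero).symm
    _ ≤ ∑' k : ℕ, ∫⁻ ξ in P (k + 1), ENNReal.ofReal (Real.logb 2 (2 + l1 ξ) * ‖g ξ‖) :=
        ENNReal.tsum_le_tsum fun k => hterm (k + 1) (Nat.le_add_left 1 k)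
    _ ≤ ∑' k : ℕ, ∫⁻ ξ in P k, ENNReal.ofReal (Real.logb 2 (2 + l1 ξ) * ‖g ξ‖) :=
        ENNReal.tsum_comp_le_tsum_of_injective Nat.succ_injective _

end
end

section
/- For every n ∈ ℕ and every t ∈ (0,1), −2π² ∫_{−1/2}^{1/2} cos(2πr) · γ_{,n}(t,r) dr = cos(2πnt), where γ_{,n}(t,r) := γ(nt mod 1, r). -/
open MeasureTheory Real Filter

noncomputable section

/-- `γ(t,r)` on `[0,1] × [-1/2,1/2]`: `max{0,r}` if `t ≤ |r|`; `t - max{0,-r}` if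
`|r| < t ≤ 1/2`; and `γ(1-t,r)` if `t > 1/2`. -/
def gammaFn (t r : ℝ) : ℝ :=
  if t ≤ 1 / 2 then (if t ≤ |r| then max 0 r else t - max 0 (-r))
  else (if 1 - t ≤ |r| then max 0 r else (1 - t) - max 0 (-r))

lemma hasDerivAt_aux (a r : ℝ) :
    HasDerivAt (fun r : ℝ => (a + r) * Real.sin (2*π*r) / (2*π) + Real.cos (2*π*r) / (2*π)^2)
      (Real.cos (2*π*r) * (a + r)) r := by
  have h1 : HasDerivAt (fun r : ℝ => 2*π*r) (2*π) r := by
    simpa using (hasDerivAt_id r).const_mul (2*π)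
  have h2 : HasDerivAt (fun r => Real.sin (2*π*r)) (Real.cos (2*π*r) * (2*π)) r :=
    (Real.hasDerivAt_sin _).comp r h1
  have h3 : HasDerivAt (fun r => Real.cos (2*π*r)) (-Real.sin (2*π*r) * (2*π)) r :=
    (Real.hasDerivAt_cos _).comp r h1
  have h4 : HasDerivAt (fun r : ℝ => a + r) 1 r := by
    simpa using (hasDerivAt_id r).const_add a
  have := (((h4.mul h2).div_const (2*π)).add (h3.div_const ((2*π)^2)))
  refine this.congr_deriv ?_
  have hπ : (π : ℝ) ≠ 0 := Real.pi_ne_zero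
  field_simp
  ring

lemma integral_cos_mul_linear (a x y : ℝ) :
    ∫ r in x..y, Real.cos (2*π*r) * (a + r)
      = ((a + y) * Real.sin (2*π*y) / (2*π) + Real.cos (2*π*y) / (2*π)^2)
        - ((a + x) * Real.sin (2*π*x) / (2*π) + Real.cos (2*π*x) / (2*π)^2) := by
  apply intervalIntegral.integral_eq_sub_of_hasDerivAt (fun r _ => hasDerivAt_aux a r)
  exact ((Real.continuous_cos.comp (continuous_const.mul continuous_id)).mul
    (continuous_const.add continuous_id)).intervalIntegrable _ _

lemma integral_cos_mul_const (a x y : ℝ) :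
    ∫ r in x..y, Real.cos (2*π*r) * a
      = a * Real.sin (2*π*y) / (2*π) - a * Real.sin (2*π*x) / (2*π) := by
  have hd : ∀ r : ℝ, HasDerivAt (fun r : ℝ => a * Real.sin (2*π*r) / (2*π))
      (Real.cos (2*π*r) * a) r := by
    intro r
    have h1 : HasDerivAt (fun r : ℝ => 2*π*r) (2*π) r := by
      simpa using (hasDerivAt_id r).const_mul (2*π)
    have h2 : HasDerivAt (fun r => Real.sin (2*π*r)) (Real.cos (2*π*r) * (2*π)) r :=
      (Real.hasDerivAt_sin _).comp r h1
    have := (h2.const_mul a).div_const (2*π)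
    have hπ : (π : ℝ) ≠ 0 := Real.pi_ne_zero
    refine this.congr_deriv ?_
    field_simp
  apply intervalIntegral.integral_eq_sub_of_hasDerivAt (fun r _ => hd r)
  exact ((Real.continuous_cos.comp (continuous_const.mul continuous_id)).mul
    continuous_const).intervalIntegrable _ _

lemma key (s : ℝ) (hs0 : 0 ≤ s) (hs : s ≤ 1/2) :
    ∫ r in (-(1/2) : ℝ)..(1/2), Real.cos (2*π*r) * gammaFn s r
      = -Real.cos (2*π*s) / (2*π^2) := by
  have hπ : (π : ℝ) ≠ 0 := Real.pi_ne_zero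
  have hπpos := Real.pi_pos
  set f : ℝ → ℝ := fun r => Real.cos (2*π*r) * gammaFn s r with hf
  -- equalities on subintervals
  have hA : Set.EqOn f (fun _ => (0:ℝ)) (Set.uIcc (-(1/2)) (-s)) := by
    intro r hr
    rw [Set.uIcc_of_le (by linarith)] at hr
    obtain ⟨hr1, hr2⟩ := hr
    have habs : s ≤ |r| := by rw [abs_of_nonpos (by linarith)]; linarith
    simp only [f, gammaFn, if_pos hs, if_pos habs]
    have : max 0 r = 0 := max_eq_left (by linarith)
    simp [this]
  have hB : Set.EqOn f (fun r => Real.cos (2*π*r) * (s + r)) (Set.uIcc (-s) 0) := by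
    intro r hr
    rw [Set.uIcc_of_le (by linarith)] at hr
    obtain ⟨hr1, hr2⟩ := hr
    simp only [f, gammaFn, if_pos hs]
    congr 1
    by_cases h : s ≤ |r|
    · rw [if_pos h]
      have : r = -s := by
        rw [abs_of_nonpos hr2] at h; linarith
      subst this
      rw [max_eq_left (by linarith)]; ring
    · rw [if_neg h, max_eq_right (by linarith)]; ring
  have hC : Set.EqOn f (fun r => Real.cos (2*π*r) * s) (Set.uIcc 0 s) := by
    intro r hr
    rw [Set.uIcc_of_le (by linarith)] at hr
    obtain ⟨hr1, hr2⟩ := hr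
    simp only [f, gammaFn, if_pos hs]
    congr 1
    by_cases h : s ≤ |r|
    · rw [if_pos h]
      have : r = s := by rw [abs_of_nonneg hr1] at h; linarith
      subst this
      rw [max_eq_right hr1]
    · rw [if_neg h, max_eq_left (by linarith)]; ring
  have hD : Set.EqOn f (fun r => Real.cos (2*π*r) * (0 + r)) (Set.uIcc s (1/2)) := by
    intro r hr
    rw [Set.uIcc_of_le (by linarith)] at hr
    obtain ⟨hr1, hr2⟩ := hr
    have habs : s ≤ |r| := by rw [abs_of_nonneg (by linarith)]; linarith
    simp only [f, gammaFn, if_pos hs, if_pos habs]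
    rw [max_eq_right (by linarith)]; ring
  -- integrability on pieces
  have int : ∀ (g : ℝ → ℝ) (x y : ℝ), Continuous g → Set.EqOn f g (Set.uIcc x y) →
      IntervalIntegrable f volume x y := by
    intro g x y hg he
    exact (hg.continuousOn.congr he).intervalIntegrable
  have iA := int _ _ _ continuous_const hA
  have iB := int _ _ _ ((Real.continuous_cos.comp (continuous_const.mul continuous_id)).mul (continuous_const.add continuous_id)) hB
  have iC := int _ _ _ ((Real.continuous_cos.comp (continuous_const.mul continuous_id)).mul continuous_const) hC
  have iD := int _ _ _ ((Real.continuous_cos.comp (continuous_const.mul continuous_id)).mul (continuous_const.add continuous_id)) hD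
  have split : ∫ r in (-(1/2) : ℝ)..(1/2), f r =
      (∫ r in (-(1/2) : ℝ)..(-s), f r) + (∫ r in (-s : ℝ)..0, f r)
      + (∫ r in (0 : ℝ)..s, f r) + (∫ r in (s : ℝ)..(1/2), f r) := by
    rw [← intervalIntegral.integral_add_adjacent_intervals ((iA.trans iB).trans iC) iD,
      ← intervalIntegral.integral_add_adjacent_intervals (iA.trans iB) iC,
      ← intervalIntegral.integral_add_adjacent_intervals iA iB]
  rw [split, intervalIntegral.integral_congr hA, intervalIntegral.integral_congr hB,
    intervalIntegral.integral_congr hC, intervalIntegral.integral_congr hD,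
    intervalIntegral.integral_zero, integral_cos_mul_linear, integral_cos_mul_linear,
    integral_cos_mul_const]
  have e1 : 2*π*(1/2 : ℝ) = π := by ring
  have e2 : 2*π*(0:ℝ) = 0 := by ring
  have e3 : 2*π*(-s) = -(2*π*s) := by ring
  rw [e1, e2, e3, Real.sin_pi, Real.cos_pi, Real.sin_zero, Real.cos_zero,
    Real.sin_neg, Real.cos_neg]
  field_simp
  ring


/-- For every `n ∈ ℕ`, `n ≥ 1`, and `t ∈ (0,1)`,
`-2π² ∫_{-1/2}^{1/2} cos(2πr) γ_{,n}(t,r) dr = cos(2πnt)`, where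
`γ_{,n}(t,r) = γ(nt mod 1, r)` and `(z mod 1)` is the fractional part. -/
theorem cos_eq_integral_gamma (n : ℕ) (hn : 0 < n) (t : ℝ) (ht : t ∈ Set.Ioo (0 : ℝ) 1) :
    -(2 * Real.pi ^ 2) *
      ∫ r in (-(1 / 2) : ℝ)..(1 / 2), Real.cos (2 * Real.pi * r) * gammaFn (Int.fract (n * t)) r
      = Real.cos (2 * Real.pi * n * t) := by
  have hπ : (π : ℝ) ≠ 0 := Real.pi_ne_zero
  set s : ℝ := Int.fract (n * t) with hsdef
  have hs0 : 0 ≤ s := Int.fract_nonneg _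
  have hs1 : s < 1 := Int.fract_lt_one _
  have hcos : Real.cos (2 * π * n * t) = Real.cos (2 * π * s) := by
    have hx : (n : ℝ) * t - s = (⌊(n:ℝ)*t⌋ : ℝ) := by
      rw [hsdef, Int.fract]; ring
    have : 2 * π * n * t = 2 * π * s + (⌊(n:ℝ)*t⌋ : ℝ) * (2 * π) := by
      linear_combination (2*π) * hx
    rw [this, Real.cos_add_int_mul_two_pi]
  rw [hcos]
  by_cases h : s ≤ 1/2
  · rw [key s hs0 h]
    field_simp
  · have h1 : (1 : ℝ) - s ≤ 1/2 := by linarith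
    have h0 : (0:ℝ) ≤ 1 - s := by linarith
    have hg : ∀ r, gammaFn s r = gammaFn (1 - s) r := by
      intro r
      simp only [gammaFn, if_neg h, if_pos h1]
    have heq : (∫ r in (-(1/2) : ℝ)..(1/2), Real.cos (2*π*r) * gammaFn s r)
        = ∫ r in (-(1/2) : ℝ)..(1/2), Real.cos (2*π*r) * gammaFn (1-s) r := by
      congr 1; ext r; rw [hg]
    rw [show (-(1/2):ℝ) = -(1/2) by ring] at heq
    rw [heq, key _ h0 h1]
    have : Real.cos (2*π*(1-s)) = Real.cos (2*π*s) := by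
      have : 2*π*(1-s) = -(2*π*s) + 1 * (2*π) := by ring
      rw [this, show ((1:ℝ) = ((1:ℤ):ℝ)) by norm_num, Real.cos_add_int_mul_two_pi,
        Real.cos_neg]
    rw [this]
    field_simp

end
end

section
/- Let g : [0,1] → ℝ be symmetric about t = 1/2, i.e. g(t) = g(1−t) for all t ∈ [0,1]. Then for all n₁, n₂ ∈ ℕ and all t ∈ [0,1], g_{,n₂}(β_{,n₁}(t)) = g_{,2n₁n₂}(t), where for a function h on [0,1] one writes h_{,n}(t) := h(nt mod 1). -/
open MeasureTheory Real Filter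

noncomputable section

/-- The triangle function `β(t) = ReLU(2t) - 2 ReLU(2t-1)`. -/
def betaFn (t : ℝ) : ℝ := max 0 (2 * t) - 2 * max 0 (2 * t - 1)

/-- If `g : [0,1] → ℝ` is symmetric about `t = 1/2`, then for all
`n₁, n₂ ≥ 1` and `t ∈ [0,1]`, `g_{,n₂}(β_{,n₁}(t)) = g_{,2n₁n₂}(t)`, where
`h_{,n}(t) = h(nt mod 1)` and `(z mod 1)` is the fractional part. -/
theorem g_comp_beta (g : ℝ → ℝ) (hg : ∀ t ∈ Set.Icc (0 : ℝ) 1, g t = g (1 - t))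
    (n₁ n₂ : ℕ) (hn₁ : 0 < n₁) (hn₂ : 0 < n₂) (t : ℝ) (ht : t ∈ Set.Icc (0 : ℝ) 1) :
    g (Int.fract (n₂ * betaFn (Int.fract (n₁ * t)))) =
      g (Int.fract (2 * n₁ * n₂ * t)) := by
  have key : ∀ x : ℝ, g (Int.fract (-x)) = g (Int.fract x) := by
    intro x
    rcases eq_or_ne (Int.fract x) 0 with h | h
    · rw [Int.fract_neg_eq_zero.mpr h, h]
    · rw [Int.fract_neg h]
      exact (hg (Int.fract x) ⟨Int.fract_nonneg x, (Int.fract_lt_one x).le⟩).symm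
  set s := Int.fract ((n₁ : ℝ) * t) with hs
  have hs0 : 0 ≤ s := Int.fract_nonneg _
  have hs1 : s < 1 := Int.fract_lt_one _
  have hmain : Int.fract (2 * (n₁ : ℝ) * n₂ * t) = Int.fract (2 * n₂ * s) := by
    have h1 : (2 * (n₁ : ℝ) * n₂ * t) = 2 * n₂ * s + ((2 * n₂ * ⌊(n₁ : ℝ) * t⌋ : ℤ) : ℝ) := by
      rw [hs, Int.fract]
      push_cast
      ring
    rw [h1, Int.fract_add_intCast]
  rcases le_or_gt s (1 / 2) with h | h
  · have hbeta : betaFn s = 2 * s := by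
      unfold betaFn
      rw [max_eq_right (by linarith), max_eq_left (by linarith)]
      ring
    rw [hbeta, hmain]
    ring_nf
  · have hbeta : betaFn s = 2 - 2 * s := by
      unfold betaFn
      rw [max_eq_right (by linarith), max_eq_right (by linarith)]
      ring
    rw [hbeta, hmain]
    have h2 : (n₂ : ℝ) * (2 - 2 * s) = -(2 * n₂ * s) + ((2 * n₂ : ℤ) : ℝ) := by
      push_cast; ring
    rw [h2, Int.fract_add_intCast]
    exact key _

end
end

section
/- For all real numbers c ≥ 0 and t ≥ 0, log₂(2 + ct) ≤ log₂(2 + c) · log₂(2 + t). -/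
/-- For all reals `c ≥ 0` and `t ≥ 0`,
`log₂(2 + ct) ≤ log₂(2 + c) · log₂(2 + t)`. -/
theorem logb_two_add_mul_le (c t : ℝ) (hc : 0 ≤ c) (ht : 0 ≤ t) :
    Real.logb 2 (2 + c * t) ≤ Real.logb 2 (2 + c) * Real.logb 2 (2 + t) := by
  set L := Real.logb 2 (2 + t) with hLdef
  have h2t : (2:ℝ) ≤ 2 + t := by linarith
  have hL1 : 1 ≤ L := by
    rw [hLdef]
    calc (1:ℝ) = Real.logb 2 2 := (Real.logb_self_eq_one (by norm_num)).symm
      _ ≤ Real.logb 2 (2 + t) :=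
        Real.logb_le_logb_of_le (by norm_num) (by norm_num) h2t
  have hpow : (2:ℝ) ^ L = 2 + t := Real.rpow_logb (by norm_num) (by norm_num) (by linarith)
  have hkey : 2 * t ≤ (2 + t) * L := by
    rcases le_total t 2 with h | h
    · nlinarith
    · have h2L : (2:ℝ) ≤ L := by
        rw [hLdef]
        have h4 : Real.logb 2 ((2:ℝ) ^ (2:ℝ)) = 2 :=
          Real.logb_rpow (by norm_num) (by norm_num)
        calc (2:ℝ) = Real.logb 2 ((2:ℝ) ^ (2:ℝ)) := h4.symm
          _ ≤ Real.logb 2 (2 + t) := by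
              apply Real.logb_le_logb_of_le (by norm_num)
              · positivity
              · rw [show ((2:ℝ) ^ (2:ℝ)) = 4 by
                  rw [show (2:ℝ) = ((2:ℕ):ℝ) by norm_num, Real.rpow_natCast]; norm_num]
                linarith
      nlinarith
  have hbern : 1 + L * (c / 2) ≤ (1 + c / 2) ^ L :=
    one_add_mul_self_le_rpow_one_add (by linarith) hL1
  have hmain : 2 + c * t ≤ (2 + c) ^ L := by
    have h1 : (2 + c) ^ L = (2:ℝ) ^ L * (1 + c / 2) ^ L := by
      rw [show (2:ℝ) + c = 2 * (1 + c / 2) by ring,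
        Real.mul_rpow (by norm_num) (by linarith)]
    rw [h1, hpow]
    have hmul : (2 + t) * (1 + L * (c / 2)) ≤ (2 + t) * (1 + c / 2) ^ L :=
      mul_le_mul_of_nonneg_left hbern (by linarith)
    nlinarith [mul_le_mul_of_nonneg_right hkey (show (0:ℝ) ≤ c / 2 by linarith)]
  calc Real.logb 2 (2 + c * t) ≤ Real.logb 2 ((2 + c) ^ L) :=
        Real.logb_le_logb_of_le (by norm_num) (by nlinarith) hmain
    _ = Real.logb 2 (2 + c) * L := by
        rw [Real.logb_rpow_eq_mul_logb_of_pos (by linarith)]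
        ring
end
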